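/- Let U be a unitary and δ a bounded operator with r‖δ‖ < 1. Then ‖(U+δ)^r − U^r‖ ≤ ‖∑_{k=0}^{r−1} U^k δ U^{−k}‖ + (e/2)·r²‖δ‖². -/

import Mathlib

/-! Write `X_n = (u + δ)^n - u^n` and `Y_n = X_n - ∑_{j<n} u^j δ u^{n-1-j}`. They satisfy
`X_{n+1} = X_n u + (u + δ)^n δ` and `Y_{n+1} = Y_n u + X_n δ`, so for `‖u‖ ≤ 1` they are dominated
by the same quantities for the scalars `u = 1`, `δ = x := ‖δ‖`, namely `(1 + x)^n - 1` and
`(1 + x)^n - 1 - n x`. Since `(1 + x)^n ≤ exp (n x)` and `exp t - 1 - t ≤ t²` for `t ≤ 1`, the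
second-order remainder is at most `(n x)²`. For unitary `u` the first-order term is
`(∑_{k<n} u^k δ u^{-k}) u^{n-1}`, whose norm is at most that of the sum. -/

open Matrix Finset
open scoped Matrix.Norms.L2Operator

theorem one_add_pow_sub_one_sub_mul_le_sq {x : ℝ} {n : ℕ} (hx : 0 ≤ x) (hnx : n * x ≤ 1) :
    (1 + x) ^ n - 1 - n * x ≤ (n * x) ^ 2 := by
  have hpow : (1 + x) ^ n ≤ Real.exp (n * x) :=
    calc (1 + x) ^ n ≤ Real.exp x ^ n := by gcongr; linarith [Real.add_one_le_exp x]
      _ = Real.exp (n * x) := (Real.exp_nat_mul x n).symm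
  have hnx₀ : 0 ≤ (n : ℝ) * x := by positivity
  have hexp := (abs_le.mp (Real.abs_exp_sub_one_sub_id_le (x := n * x)
    (by rwa [abs_of_nonneg hnx₀]))).2
  linarith

section Semiring

variable {R : Type*} [Semiring R]

def firstOrderPow (u δ : R) (n : ℕ) : R :=
  ∑ j ∈ range n, u ^ j * δ * u ^ (n - 1 - j)

theorem firstOrderPow_succ (u δ : R) (n : ℕ) :
    firstOrderPow u δ (n + 1) = firstOrderPow u δ n * u + u ^ n * δ := by
  rw [firstOrderPow, sum_range_succ, firstOrderPow, sum_mul, Nat.add_sub_cancel, Nat.sub_self,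
    pow_zero, mul_one]
  congr 1
  refine sum_congr rfl fun j hj => ?_
  have := mem_range.mp hj
  rw [mul_assoc _ (u ^ _), ← pow_succ]
  congr 2
  omega

theorem firstOrderPow_eq_sum_mul_pow {u v : R} (hvu : v * u = 1) (δ : R) (n : ℕ) :
    firstOrderPow u δ n = (∑ k ∈ range n, u ^ k * δ * v ^ k) * u ^ (n - 1) := by
  rw [firstOrderPow, sum_mul]
  refine sum_congr rfl fun k hk => ?_
  have hsplit : u ^ (n - 1) = u ^ k * u ^ (n - 1 - k) := by
    rw [← pow_add]
    congr 1
    have := mem_range.mp hk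
    omega
  rw [hsplit, mul_assoc (u ^ k * δ), ← mul_assoc (v ^ k), pow_mul_pow_eq_one k hvu, one_mul]

end Semiring

section NormedRing

variable {R : Type*} [NormedRing R] [NormOneClass R] {u δ : R}

theorem norm_add_pow_sub_pow_le (hu : ‖u‖ ≤ 1) (n : ℕ) :
    ‖(u + δ) ^ n - u ^ n‖ ≤ (1 + ‖δ‖) ^ n - 1 := by
  induction n with
  | zero => simp
  | succ n ih =>
    have hrec : (u + δ) ^ (n + 1) - u ^ (n + 1) = ((u + δ) ^ n - u ^ n) * u + (u + δ) ^ n * δ := by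
      rw [pow_succ, pow_succ]
      noncomm_ring
    have hpow : ‖(u + δ) ^ n‖ ≤ (1 + ‖δ‖) ^ n :=
      (norm_pow_le _ n).trans (pow_le_pow_left₀ (norm_nonneg _)
        ((norm_add_le u δ).trans (by linarith)) n)
    calc ‖(u + δ) ^ (n + 1) - u ^ (n + 1)‖
        ≤ ‖(u + δ) ^ n - u ^ n‖ * ‖u‖ + ‖(u + δ) ^ n‖ * ‖δ‖ := by
          rw [hrec]
          exact (norm_add_le _ _).trans (add_le_add (norm_mul_le _ _) (norm_mul_le _ _))
      _ ≤ ((1 + ‖δ‖) ^ n - 1) * 1 + (1 + ‖δ‖) ^ n * ‖δ‖ :=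
          add_le_add (mul_le_mul ih hu (norm_nonneg _) ((norm_nonneg _).trans ih))
            (mul_le_mul_of_nonneg_right hpow (norm_nonneg _))
      _ = (1 + ‖δ‖) ^ (n + 1) - 1 := by ring

theorem norm_add_pow_sub_pow_sub_firstOrderPow_le (hu : ‖u‖ ≤ 1) (n : ℕ) :
    ‖(u + δ) ^ n - u ^ n - firstOrderPow u δ n‖ ≤ (1 + ‖δ‖) ^ n - 1 - n * ‖δ‖ := by
  induction n with
  | zero => simp [firstOrderPow]
  | succ n ih =>
    have hrec : (u + δ) ^ (n + 1) - u ^ (n + 1) - firstOrderPow u δ (n + 1) =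
        ((u + δ) ^ n - u ^ n - firstOrderPow u δ n) * u + ((u + δ) ^ n - u ^ n) * δ := by
      rw [firstOrderPow_succ, pow_succ, pow_succ]
      noncomm_ring
    calc ‖(u + δ) ^ (n + 1) - u ^ (n + 1) - firstOrderPow u δ (n + 1)‖
        ≤ ‖(u + δ) ^ n - u ^ n - firstOrderPow u δ n‖ * ‖u‖ + ‖(u + δ) ^ n - u ^ n‖ * ‖δ‖ := by
          rw [hrec]
          exact (norm_add_le _ _).trans (add_le_add (norm_mul_le _ _) (norm_mul_le _ _))
      _ ≤ ((1 + ‖δ‖) ^ n - 1 - n * ‖δ‖) * 1 + ((1 + ‖δ‖) ^ n - 1) * ‖δ‖ :=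
          add_le_add (mul_le_mul ih hu (norm_nonneg _) ((norm_nonneg _).trans ih))
            (mul_le_mul_of_nonneg_right (norm_add_pow_sub_pow_le hu n) (norm_nonneg _))
      _ = (1 + ‖δ‖) ^ (n + 1) - 1 - (n + 1 : ℕ) * ‖δ‖ := by push_cast; ring

theorem norm_add_pow_sub_pow_le_of_mul_eq_one {v : R} (hu : ‖u‖ ≤ 1) (hvu : v * u = 1) {n : ℕ}
    (hn : n * ‖δ‖ ≤ 1) :
    ‖(u + δ) ^ n - u ^ n‖ ≤ ‖∑ k ∈ range n, u ^ k * δ * v ^ k‖ + (n * ‖δ‖) ^ 2 := by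
  have hfirst : ‖firstOrderPow u δ n‖ ≤ ‖∑ k ∈ range n, u ^ k * δ * v ^ k‖ := by
    rw [firstOrderPow_eq_sum_mul_pow hvu]
    refine (norm_mul_le _ _).trans (mul_le_of_le_one_right (norm_nonneg _) ?_)
    exact (norm_pow_le _ _).trans (pow_le_one₀ (norm_nonneg _) hu)
  calc ‖(u + δ) ^ n - u ^ n‖
      ≤ ‖(u + δ) ^ n - u ^ n - firstOrderPow u δ n‖ + ‖firstOrderPow u δ n‖ :=
        norm_le_norm_sub_add _ _
    _ ≤ ((1 + ‖δ‖) ^ n - 1 - n * ‖δ‖) + ‖∑ k ∈ range n, u ^ k * δ * v ^ k‖ :=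
        add_le_add (norm_add_pow_sub_pow_sub_firstOrderPow_le hu n) hfirst
    _ ≤ ‖∑ k ∈ range n, u ^ k * δ * v ^ k‖ + (n * ‖δ‖) ^ 2 := by
        linarith [one_add_pow_sub_one_sub_mul_le_sq (norm_nonneg δ) hn]

end NormedRing

theorem trotter_total_error_bound_general {d : ℕ} (U δ : Matrix (Fin d) (Fin d) ℂ)
    (hU : U ∈ Matrix.unitaryGroup (Fin d) ℂ)
    (r : ℕ) (h : (r : ℝ) * ‖δ‖ < 1) :
    ‖(U + δ) ^ r - U ^ r‖ ≤
      ‖∑ k ∈ Finset.range r, U ^ k * δ * U⁻¹ ^ k‖ +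
        Real.exp 1 / 2 * (r : ℝ) ^ 2 * ‖δ‖ ^ 2 := by
  -- `NormOneClass` (`‖1‖ = 1`) fails for `d = 0`, where all matrices vanish.
  rcases subsingleton_or_nontrivial (Matrix (Fin d) (Fin d) ℂ) with hR | hR
  · rw [Subsingleton.elim ((U + δ) ^ r) (U ^ r), sub_self, norm_zero]
    positivity
  have hUinv : U⁻¹ * U = 1 := by
    rw [Matrix.inv_eq_left_inv (Unitary.star_mul_self_of_mem hU)]
    exact Unitary.star_mul_self_of_mem hU
  have he : 1 ≤ Real.exp 1 / 2 := by linarith [Real.exp_one_gt_d9]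
  calc ‖(U + δ) ^ r - U ^ r‖
      ≤ ‖∑ k ∈ Finset.range r, U ^ k * δ * U⁻¹ ^ k‖ + (r * ‖δ‖) ^ 2 :=
        norm_add_pow_sub_pow_le_of_mul_eq_one (CStarRing.norm_of_mem_unitary hU).le hUinv h.le
    _ ≤ _ := by nlinarith [sq_nonneg ((r : ℝ) * ‖δ‖)]

/-- For a unitary `U` and bounded operator `δ` with `r‖δ‖ < 1`, the total Trotter
error `‖(U+δ)^r − U^r‖` is bounded by the norm of the first-order accumulated error
plus `(e/2) r² ‖δ‖²`. -/
theorem trotter_total_error_bound {d : ℕ} (U δ : Matrix (Fin d) (Fin d) ℂ)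
    (hU : U ∈ Matrix.unitaryGroup (Fin d) ℂ)
    (r : ℕ) (hr : 0 < r) (h : (r : ℝ) * ‖δ‖ < 1) :
    ‖(U + δ) ^ r - U ^ r‖ ≤
      ‖∑ k ∈ Finset.range r, U ^ k * δ * U⁻¹ ^ k‖ +
        Real.exp 1 / 2 * (r : ℝ) ^ 2 * ‖δ‖ ^ 2 :=
  trotter_total_error_bound_general U δ hU r h
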